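/- Let K be a field, let n be a positive integer, let t ∈ K be nonzero, let x = (x_1, …, x_n) ∈ K^n have pairwise distinct nonzero entries, let y = (y_1, …, y_n) ∈ K^n have nonzero entries, and assume t·x_i·y_j ≠ 1 for all 1 ≤ i, j ≤ n. Then F(1; x, y; t) = F(t; x, y; t) · ∏_{i=1}^{n} x_i·y_i. -/

import Mathlib

open Finset

/-- The bisymmetric function `F(u; x, y; t)` of Kirillov--Noumi. -/
noncomputable def bisymF {K : Type*} [Field K] {m n : ℕ} (u t : K)
    (x : Fin m → K) (y : Fin n → K) : K :=
  ∑ I : Finset (Fin m),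
    (-u) ^ I.card * t ^ (I.card.choose 2) *
      (∏ i ∈ I, ∏ j ∈ Iᶜ, (t * x i - x j) / (x i - x j)) *
      (∏ i ∈ I, ∏ j, (1 - x i * y j) / (1 - t * x i * y j))

section Aux
open Matrix

variable {K : Type*} [Field K] {n : ℕ}

/-- Subset-expansion of a determinant whose rows are `a i + c i • b i`. -/
lemma det_rows_add_smul (a b : Fin n → Fin n → K) (c : Fin n → K) :
    Matrix.det (Matrix.of fun i => a i + c i • b i) =
      ∑ I : Finset (Fin n), (∏ i ∈ I, c i) * Matrix.det (Matrix.of (I.piecewise b a)) := by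
  have h1 : (Matrix.of fun i => a i + c i • b i : Matrix (Fin n) (Fin n) K)
      = (fun i => c i • b i) + a := by
    funext i j; simp [Matrix.of_apply, add_comm]
  rw [h1]
  show (Matrix.detRowAlternating (R := K) (n := Fin n)).toMultilinearMap
    ((fun i => c i • b i) + a) = _
  rw [(Matrix.detRowAlternating (R := K) (n := Fin n)).toMultilinearMap.map_add_univ
    (fun i => c i • b i) a]
  refine Finset.sum_congr rfl fun I _ => ?_
  have h2 : I.piecewise (fun i => c i • b i) a
      = fun i => (if i ∈ I then c i else 1) • (I.piecewise b a i) := by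
    funext i
    by_cases hi : i ∈ I <;> simp [Finset.piecewise, hi]
  show (Matrix.detRowAlternating (R := K) (n := Fin n)).toMultilinearMap
    (I.piecewise (fun i => c i • b i) a) = _
  rw [h2]
  rw [(Matrix.detRowAlternating (R := K) (n := Fin n)).toMultilinearMap.map_smul_univ
    (fun i => if i ∈ I then c i else 1) (I.piecewise b a)]
  rw [Finset.prod_ite_mem, Finset.univ_inter]
  rw [smul_eq_mul]
  rfl

lemma prod_pairs_lt (G : Fin n → Fin n → K) :
    ∏ p ∈ univ.filter (fun p : Fin n × Fin n => p.1 < p.2), G p.1 p.2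
      = ∏ i, ∏ j ∈ Ioi i, G i j := by
  rw [Finset.prod_filter, Fintype.prod_prod_type]
  refine Finset.prod_congr rfl fun i _ => ?_
  rw [← Finset.prod_filter, Finset.filter_lt_eq_Ioi]

lemma prod_pairs_split (Q : Fin n × Fin n → K) (hdiag : ∀ i, Q (i, i) = 1) :
    ∏ p : Fin n × Fin n, Q p
      = ∏ p ∈ univ.filter (fun p : Fin n × Fin n => p.1 < p.2), (Q p * Q p.swap) := by
  rw [Finset.prod_mul_distrib]
  have hswap : ∏ p ∈ univ.filter (fun p : Fin n × Fin n => p.1 < p.2), Q p.swap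
      = ∏ p ∈ univ.filter (fun p : Fin n × Fin n => p.2 < p.1), Q p := by
    refine Finset.prod_nbij' Prod.swap Prod.swap ?_ ?_ ?_ ?_ ?_ <;>
      simp [Prod.swap, Finset.mem_filter]
  rw [hswap]
  rw [← Finset.prod_filter_mul_prod_filter_not univ (fun p : Fin n × Fin n => p.1 < p.2) Q]
  congr 1
  have hsplit : (univ.filter (fun p : Fin n × Fin n => ¬ p.1 < p.2))
      = (univ.filter (fun p : Fin n × Fin n => p.2 < p.1))
        ∪ (univ.filter (fun p : Fin n × Fin n => p.1 = p.2)) := by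
    ext p
    simp only [Finset.mem_filter, Finset.mem_union, Finset.mem_univ, true_and, not_lt]
    constructor
    · intro h
      rcases lt_or_eq_of_le h with h | h
      · exact Or.inl h
      · exact Or.inr h.symm
    · rintro (h | h)
      · exact le_of_lt h
      · exact le_of_eq h.symm
  rw [hsplit, Finset.prod_union]
  · have h1 : ∏ p ∈ univ.filter (fun p : Fin n × Fin n => p.1 = p.2), Q p = 1 := by
      refine Finset.prod_eq_one fun p hp => ?_
      simp only [Finset.mem_filter] at hp
      obtain ⟨p1, p2⟩ := p
      cases hp.2
      exact hdiag p1
    rw [h1, mul_one]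
  · rw [Finset.disjoint_filter]
    intro p _ h h2
    exact absurd h2 (ne_of_gt h)

lemma card_lt_pairs (I : Finset (Fin n)) :
    ((I ×ˢ I).filter (fun p => p.1 < p.2)).card = I.card.choose 2 := by
  have hswap : ((I ×ˢ I).filter (fun p => p.1 < p.2)).card
      = ((I ×ˢ I).filter (fun p => p.2 < p.1)).card := by
    refine Finset.card_nbij' Prod.swap Prod.swap ?_ ?_ ?_ ?_ <;>
      simp [Prod.swap, Finset.mem_filter, Finset.mem_product, and_comm, Set.MapsTo,
        Set.LeftInvOn, Set.RightInvOn] <;> tauto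
  have hunion : I.offDiag
      = (I ×ˢ I).filter (fun p => p.1 < p.2) ∪ (I ×ˢ I).filter (fun p => p.2 < p.1) := by
    ext p
    simp only [Finset.mem_offDiag, Finset.mem_union, Finset.mem_filter, Finset.mem_product]
    constructor
    · rintro ⟨h1, h2, h3⟩
      rcases lt_or_gt_of_ne h3 with h | h
      · exact Or.inl ⟨⟨h1, h2⟩, h⟩
      · exact Or.inr ⟨⟨h1, h2⟩, h⟩
    · rintro (⟨⟨h1, h2⟩, h⟩ | ⟨⟨h1, h2⟩, h⟩)
      · exact ⟨h1, h2, ne_of_lt h⟩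
      · exact ⟨h1, h2, ne_of_gt h⟩
  have hdisj : Disjoint ((I ×ˢ I).filter (fun p => p.1 < p.2))
      ((I ×ˢ I).filter (fun p => p.2 < p.1)) := by
    rw [Finset.disjoint_filter]
    intro p _ h h2
    exact absurd h2 (not_lt_of_gt h)
  have hcard := Finset.offDiag_card I
  rw [hunion, Finset.card_union_of_disjoint hdisj, ← hswap] at hcard
  rw [Nat.choose_two_right]
  have hm : I.card * (I.card - 1) = I.card * I.card - I.card := by
    rw [Nat.mul_sub, mul_one]
  omega

lemma det_vandermonde_piecewise (t : K) (x : Fin n → K) (hx : Function.Injective x)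
    (I : Finset (Fin n)) :
    Matrix.det (Matrix.vandermonde (fun i => if i ∈ I then t * x i else x i)) =
      t ^ (I.card.choose 2) * (∏ i ∈ I, ∏ j ∈ Iᶜ, (t * x i - x j) / (x i - x j)) *
        Matrix.det (Matrix.vandermonde x) := by
  classical
  rw [Matrix.det_vandermonde, Matrix.det_vandermonde]
  set q : Fin n → Fin n → K := fun i j => (t * x i - x j) / (x i - x j) with hq
  have key : ∀ i j : Fin n, i < j →
      (if j ∈ I then t * x j else x j) - (if i ∈ I then t * x i else x i) =
      ((if i ∈ I ∧ j ∈ I then t else 1) *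
       ((if i ∈ I ∧ j ∈ Iᶜ then q i j else 1) *
        (if j ∈ I ∧ i ∈ Iᶜ then q j i else 1))) * (x j - x i) := by
    intro i j hij
    have hxij : x i ≠ x j := fun h => (ne_of_lt hij) (hx h)
    have hne : x i - x j ≠ 0 := sub_ne_zero.2 hxij
    have hne' : x j - x i ≠ 0 := sub_ne_zero.2 (Ne.symm hxij)
    by_cases hi : i ∈ I <;> by_cases hj : j ∈ I <;>
      simp only [hq, hi, hj, Finset.mem_compl, not_true, not_false_iff, and_true, and_false,
        true_and, false_and, if_true, if_false] <;>
      field_simp <;> ring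
  calc ∏ i, ∏ j ∈ Ioi i,
        ((if j ∈ I then t * x j else x j) - (if i ∈ I then t * x i else x i))
      = ∏ i, ∏ j ∈ Ioi i,
        (((if i ∈ I ∧ j ∈ I then t else 1) *
          ((if i ∈ I ∧ j ∈ Iᶜ then q i j else 1) *
           (if j ∈ I ∧ i ∈ Iᶜ then q j i else 1))) * (x j - x i)) := by
        refine Finset.prod_congr rfl fun i _ => Finset.prod_congr rfl fun j hj => ?_
        exact key i j (Finset.mem_Ioi.1 hj)
    _ = (∏ i, ∏ j ∈ Ioi i, (if i ∈ I ∧ j ∈ I then t else 1)) *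
        (∏ i, ∏ j ∈ Ioi i,
          ((if i ∈ I ∧ j ∈ Iᶜ then q i j else 1) * (if j ∈ I ∧ i ∈ Iᶜ then q j i else 1))) *
        (∏ i, ∏ j ∈ Ioi i, (x j - x i)) := by
        simp only [Finset.prod_mul_distrib]
    _ = t ^ (I.card.choose 2) * (∏ i ∈ I, ∏ j ∈ Iᶜ, q i j) *
        (∏ i, ∏ j ∈ Ioi i, (x j - x i)) := by
        congr 1
        congr 1
        · -- t-part
          rw [← prod_pairs_lt (fun i j => if i ∈ I ∧ j ∈ I then t else 1)]
          rw [Finset.prod_ite, Finset.prod_const, Finset.prod_const_one, mul_one]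
          congr 1
          have : (univ.filter (fun p : Fin n × Fin n => p.1 < p.2)).filter
              (fun p => p.1 ∈ I ∧ p.2 ∈ I) = (I ×ˢ I).filter (fun p => p.1 < p.2) := by
            ext p
            simp only [Finset.mem_filter, Finset.mem_univ, true_and, Finset.mem_product]
            tauto
          rw [this, card_lt_pairs]
        · -- mixed part
          set Q : Fin n × Fin n → K := fun p => if p.1 ∈ I ∧ p.2 ∈ Iᶜ then q p.1 p.2 else 1
            with hQ
          have hdiag : ∀ i : Fin n, Q (i, i) = 1 := by
            intro i
            simp only [hQ, Finset.mem_compl]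
            rw [if_neg]
            tauto
          rw [← prod_pairs_lt (fun i j =>
            (if i ∈ I ∧ j ∈ Iᶜ then q i j else 1) * (if j ∈ I ∧ i ∈ Iᶜ then q j i else 1))]
          have : ∀ p ∈ univ.filter (fun p : Fin n × Fin n => p.1 < p.2),
              (if p.1 ∈ I ∧ p.2 ∈ Iᶜ then q p.1 p.2 else 1) *
                (if p.2 ∈ I ∧ p.1 ∈ Iᶜ then q p.2 p.1 else 1) = Q p * Q p.swap := by
            intro p _
            simp [hQ, Prod.swap]
          rw [Finset.prod_congr rfl this, ← prod_pairs_split Q hdiag]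
          rw [← Finset.prod_filter_mul_prod_filter_not univ (fun p : Fin n × Fin n => p.1 ∈ I ∧ p.2 ∈ Iᶜ) Q]
          have h1 : ∏ p ∈ univ.filter (fun p : Fin n × Fin n => ¬ (p.1 ∈ I ∧ p.2 ∈ Iᶜ)), Q p
              = 1 := by
            refine Finset.prod_eq_one fun p hp => ?_
            simp only [Finset.mem_filter] at hp
            simp only [hQ]
            exact if_neg hp.2
          rw [h1, mul_one]
          have h2 : univ.filter (fun p : Fin n × Fin n => p.1 ∈ I ∧ p.2 ∈ Iᶜ) = I ×ˢ Iᶜ := by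
            ext p
            simp [Finset.mem_product]
          rw [h2]
          have h3 : ∀ p ∈ I ×ˢ Iᶜ, Q p = q p.1 p.2 := by
            intro p hp
            simp only [Finset.mem_product] at hp
            simp only [hQ]
            exact if_pos hp
          rw [Finset.prod_congr rfl h3, Finset.prod_product']

lemma det_Mu (u t : K) (x : Fin n → K) (hx : Function.Injective x) (g : Fin n → K) :
    Matrix.det (Matrix.of fun i e : Fin n => x i ^ (e : ℕ) * (1 - u * t ^ (e : ℕ) * g i)) =
      (∑ I : Finset (Fin n), (-u) ^ I.card * t ^ (I.card.choose 2) *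
        (∏ i ∈ I, ∏ j ∈ Iᶜ, (t * x i - x j) / (x i - x j)) * ∏ i ∈ I, g i) *
        Matrix.det (Matrix.vandermonde x) := by
  classical
  have h1 : (Matrix.of fun i e : Fin n => x i ^ (e : ℕ) * (1 - u * t ^ (e : ℕ) * g i))
      = Matrix.of fun i => (fun e : Fin n => x i ^ (e : ℕ))
        + (-(u * g i)) • (fun e : Fin n => (t * x i) ^ (e : ℕ)) := by
    funext i e
    simp only [Matrix.of_apply, Pi.add_apply, Pi.smul_apply, smul_eq_mul, mul_pow]
    ring
  rw [h1, det_rows_add_smul]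
  rw [Finset.sum_mul]
  refine Finset.sum_congr rfl fun I _ => ?_
  have h2 : Matrix.of (I.piecewise (fun i => (fun e : Fin n => (t * x i) ^ (e : ℕ)))
      (fun i => (fun e : Fin n => x i ^ (e : ℕ))))
      = Matrix.vandermonde (fun i => if i ∈ I then t * x i else x i) := by
    funext i e
    simp only [Matrix.of_apply, Finset.piecewise, Matrix.vandermonde]
    split <;> rfl
  rw [h2, det_vandermonde_piecewise t x hx I]
  have h3 : ∏ i ∈ I, -(u * g i) = (-u) ^ I.card * ∏ i ∈ I, g i := by
    rw [← Finset.prod_const, ← Finset.prod_mul_distrib]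
    refine Finset.prod_congr rfl fun i _ => by ring
  rw [h3]
  ring

lemma det_shift_relation (m : ℕ) (W : Fin (m + 2) → Fin (m + 1) → K) (c : Fin (m + 2) → K)
    (hc0 : c 0 = 1) (hrel : ∀ i, ∑ k, c k * W k i = 0) :
    Matrix.det (Matrix.of fun e i => W e.castSucc i) =
      ((-1) ^ (m + 1) * c (Fin.last (m + 1))) *
        Matrix.det (Matrix.of fun e i => W e.succ i) := by
  classical
  set d := (Matrix.detRowAlternating : (Fin (m+1) → K) [⋀^Fin (m+1)]→ₗ[K] K) with hd
  set r1 : Fin (m + 1) → (Fin (m + 1) → K) := fun e => W e.castSucc with hr1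
  set r2 : Fin (m + 1) → (Fin (m + 1) → K) := fun e => W e.succ with hr2
  show d r1 = _ * d r2
  have hW0 : W 0 = ∑ k : Fin (m + 1), (-(c k.succ)) • W k.succ := by
    funext i
    have h := hrel i
    rw [Fin.sum_univ_succ, hc0, one_mul] at h
    have h' : W 0 i = -∑ k : Fin (m + 1), c k.succ * W k.succ i :=
      eq_neg_of_add_eq_zero_left h
    rw [Finset.sum_apply, h', ← Finset.sum_neg_distrib]
    exact Finset.sum_congr rfl fun k _ => by
      simp only [Pi.smul_apply, smul_eq_mul]; ring
  have hr10 : r1 0 = W 0 := by simp [hr1]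
  have step1 : d r1 = d (Function.update r1 0 (W 0)) := by
    rw [← hr10, Function.update_eq_self]
  rw [step1, hW0, AlternatingMap.map_update_sum]
  have step2 : ∀ k : Fin (m + 1),
      d (Function.update r1 0 ((-(c k.succ)) • W k.succ))
        = (-(c k.succ)) * d (Function.update r1 0 (W k.succ)) := by
    intro k
    rw [AlternatingMap.map_update_smul, smul_eq_mul]
  have step3 : ∀ k : Fin (m + 1), k ≠ Fin.last m →
      d (Function.update r1 0 (W k.succ)) = 0 := by
    intro k hk
    have hkv : k.val < m := by
      rcases lt_or_eq_of_le (Nat.lt_succ_iff.1 k.isLt) with h | h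
      · exact h
      · exact absurd (Fin.ext h) hk
    set j : Fin (m + 1) := ⟨k.val + 1, by omega⟩ with hj
    have hj0 : j ≠ 0 := by
      intro h
      have := congrArg Fin.val h
      simp [hj] at this
    have hjc : j.castSucc = k.succ := by
      apply Fin.ext
      simp [hj]
    refine AlternatingMap.map_eq_zero_of_eq d _ (i := 0) (j := j) ?_ (Ne.symm hj0)
    rw [Function.update_self, Function.update_of_ne hj0]
    simp [hr1, hjc]
  rw [Finset.sum_congr rfl (fun k _ => step2 k)]
  rw [Finset.sum_eq_single (Fin.last m)]
  rotate_left
  · intro k _ hk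
    rw [step3 k hk, mul_zero]
  · intro h
    exact absurd (Finset.mem_univ _) h
  rw [Fin.succ_last]
  set v : Fin (m + 1) → (Fin (m + 1) → K) := Function.update r1 0 (W (Fin.last (m + 1)))
    with hv
  have hcomp : v ∘ (finRotate (m + 1)) = r2 := by
    funext e
    simp only [Function.comp_apply, finRotate_succ_apply]
    by_cases he : e = Fin.last m
    · subst he
      rw [Fin.last_add_one, hv, Function.update_self, hr2]
      exact (congrArg W (Fin.succ_last m)).symm
    · have helt : e < Fin.last m := Fin.lt_last_iff_ne_last.2 he
      have he1 : e + 1 ≠ 0 := by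
        intro h
        have h2 := congrArg Fin.val h
        rw [Fin.val_add_one_of_lt helt] at h2
        simp at h2
      rw [hv, Function.update_of_ne he1, hr1, hr2]
      show W (e + 1).castSucc = W e.succ
      refine congrArg W (Fin.ext ?_)
      simp [Fin.val_add_one_of_lt helt]
  have hperm := AlternatingMap.map_perm (g := d) v (finRotate (m + 1))
  rw [hcomp, sign_finRotate] at hperm
  have hval : d v = ((-1 : ℤˣ) ^ m) • d r2 := by
    rw [hperm, smul_smul, ← pow_add, Nat.add_sub_cancel, Even.neg_one_pow ⟨m, rfl⟩, one_smul]
  rw [hval]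
  have hsmul : ((-1 : ℤˣ) ^ m) • d r2 = (-1 : K) ^ m * d r2 := by
    rcases Nat.even_or_odd m with h | h
    · rw [h.neg_one_pow, h.neg_one_pow, one_smul, one_mul]
    · rw [h.neg_one_pow, h.neg_one_pow]
      simp [Units.smul_def]
  rw [hsmul]
  ring

open Polynomial in
lemma poly_facts (y : Fin n → K) (hy0 : ∀ j, y j ≠ 0) :
    ∃ P : Polynomial K,
      (∀ a : K, ∑ k : Fin (n + 1), P.coeff k * a ^ (k : ℕ) = ∏ j, (1 - y j * a)) ∧
      P.coeff 0 = 1 ∧ P.coeff n = (-1) ^ n * ∏ j, y j := by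
  classical
  set P : Polynomial K := ∏ j, (C (-(y j)) * X + C 1) with hP
  have hfac0 : ∀ j : Fin n, (C (-(y j)) * X + C 1 : Polynomial K) ≠ 0 := by
    intro j h
    have := Polynomial.natDegree_linear (show -(y j) ≠ 0 by simpa using hy0 j)
      (b := (1 : K))
    rw [h] at this
    simp at this
  have hdeg : P.natDegree = n := by
    rw [hP, Polynomial.natDegree_prod _ _ (fun j _ => hfac0 j)]
    rw [Finset.sum_congr rfl (fun j _ => Polynomial.natDegree_linear
      (show -(y j) ≠ 0 by simpa using hy0 j) (b := (1 : K)))]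
    simp
  have heval : ∀ a : K, P.eval a = ∏ j, (1 - y j * a) := by
    intro a
    rw [hP, Polynomial.eval_prod]
    refine Finset.prod_congr rfl fun j _ => ?_
    simp
    ring
  refine ⟨P, ?_, ?_, ?_⟩
  · intro a
    have h1 := Polynomial.eval_eq_sum_range' (show P.natDegree < n + 1 by omega) a
    rw [← heval a, h1, ← Fin.sum_univ_eq_sum_range]
  · rw [Polynomial.coeff_zero_eq_eval_zero, heval 0]
    simp
  · have h1 : P.coeff n = P.leadingCoeff := by
      rw [Polynomial.leadingCoeff, hdeg]
    rw [h1, hP, Polynomial.leadingCoeff_prod]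
    rw [Finset.prod_congr rfl (fun j _ => Polynomial.leadingCoeff_linear
      (show -(y j) ≠ 0 by simpa using hy0 j) (b := (1 : K)))]
    rw [show (∏ j : Fin n, -y j) = ∏ j : Fin n, (-1) * y j from
      Finset.prod_congr rfl fun j _ => by ring]
    rw [Finset.prod_mul_distrib, Finset.prod_const]
    simp

end Aux

open Matrix in
/-- For `m = n`: `F(1;x,y;t) = F(t;x,y;t) · ∏ x_i y_i`. -/
theorem bisymF_one_eq_t {K : Type*} [Field K] {n : ℕ} (hn : 0 < n)
    (t : K) (ht : t ≠ 0)
    (x y : Fin n → K)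
    (hx : Function.Injective x)
    (hx0 : ∀ i, x i ≠ 0) (hy0 : ∀ j, y j ≠ 0)
    (hxy : ∀ i j : Fin n, t * x i * y j ≠ 1) :
    bisymF 1 t x y = bisymF t t x y * ∏ i, x i * y i := by
  classical
  obtain ⟨m, rfl⟩ : ∃ m, n = m + 1 := ⟨n - 1, by omega⟩
  set g : Fin (m + 1) → K := fun i => ∏ j, (1 - x i * y j) / (1 - t * x i * y j) with hg
  set Ff : Fin (m + 1) → K := fun i => ∏ j, (1 - y j * x i) with hFf
  set Hh : Fin (m + 1) → K := fun i => ∏ j, (1 - y j * (t * x i)) with hHh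
  have hH0 : ∀ i, Hh i ≠ 0 := by
    intro i
    rw [hHh]
    refine Finset.prod_ne_zero_iff.2 fun j _ => sub_ne_zero.2 fun h => hxy i j ?_
    linear_combination -h
  have hd0 : ∀ i j, (1 : K) - t * x i * y j ≠ 0 := by
    intro i j
    exact sub_ne_zero.2 fun h => hxy i j h.symm
  have hgH : ∀ i, Hh i * g i = Ff i := by
    intro i
    rw [hg, hHh, hFf, ← Finset.prod_mul_distrib]
    refine Finset.prod_congr rfl fun j _ => ?_
    have := hd0 i j
    rw [mul_div_assoc', div_eq_iff this]
    ring
  obtain ⟨P, hsum, hc0, hcn⟩ := poly_facts y hy0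
  set W : Fin (m + 2) → Fin (m + 1) → K :=
    fun k i => x i ^ (k : ℕ) * (Hh i - t ^ (k : ℕ) * Ff i) with hW
  have hrel : ∀ i, ∑ k : Fin (m + 2), P.coeff k * W k i = 0 := by
    intro i
    have h1 : ∀ k : Fin (m + 2), P.coeff k * W k i =
        Hh i * (P.coeff k * x i ^ (k : ℕ)) - Ff i * (P.coeff k * (t * x i) ^ (k : ℕ)) := by
      intro k
      simp only [hW, mul_pow]
      ring
    rw [Finset.sum_congr rfl fun k _ => h1 k, Finset.sum_sub_distrib,
      ← Finset.mul_sum, ← Finset.mul_sum, hsum (x i), hsum (t * x i)]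
    simp only [hFf, hHh]
    ring
  have hkey := det_shift_relation m W (fun k => P.coeff k) hc0 hrel
  -- identify the two determinants
  have hB1 : Matrix.det (Matrix.of fun e i => W e.castSucc i)
      = (∏ i, Hh i) * (bisymF 1 t x y * Matrix.det (Matrix.vandermonde x)) := by
    have h1 : (Matrix.of fun e i => W e.castSucc i)
        = (Matrix.of fun i e : Fin (m + 1) =>
            Hh i * (x i ^ (e : ℕ) * (1 - 1 * t ^ (e : ℕ) * g i)))ᵀ := by
      funext e i
      simp only [Matrix.of_apply, Matrix.transpose_apply, hW, Fin.coe_castSucc]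
      linear_combination (x i ^ (e : ℕ) * t ^ (e : ℕ)) * hgH i
    rw [h1, Matrix.det_transpose]
    refine (Matrix.det_mul_column Hh (fun i e : Fin (m + 1) =>
      x i ^ (e : ℕ) * (1 - 1 * t ^ (e : ℕ) * g i))).trans ?_
    rw [show ((fun i e => x i ^ (e : ℕ) * (1 - 1 * t ^ (e : ℕ) * g i)) :
        Matrix (Fin (m + 1)) (Fin (m + 1)) K)
      = Matrix.of (fun i e : Fin (m + 1) => x i ^ (e : ℕ) * (1 - 1 * t ^ (e : ℕ) * g i)) from rfl]
    rw [det_Mu 1 t x hx g]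
    congr 2
  have hB2 : Matrix.det (Matrix.of fun e i => W e.succ i)
      = (∏ i, x i * Hh i) * (bisymF t t x y * Matrix.det (Matrix.vandermonde x)) := by
    have h1 : (Matrix.of fun e i => W e.succ i)
        = (Matrix.of fun i e : Fin (m + 1) =>
            (x i * Hh i) * (x i ^ (e : ℕ) * (1 - t * t ^ (e : ℕ) * g i)))ᵀ := by
      funext e i
      simp only [Matrix.of_apply, Matrix.transpose_apply, hW, Fin.val_succ]
      rw [pow_succ, pow_succ]
      linear_combination (x i ^ (e : ℕ) * x i * t ^ (e : ℕ) * t) * hgH i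
    rw [h1, Matrix.det_transpose]
    refine (Matrix.det_mul_column (fun i => x i * Hh i) (fun i e : Fin (m + 1) =>
      x i ^ (e : ℕ) * (1 - t * t ^ (e : ℕ) * g i))).trans ?_
    rw [show ((fun i e => x i ^ (e : ℕ) * (1 - t * t ^ (e : ℕ) * g i)) :
        Matrix (Fin (m + 1)) (Fin (m + 1)) K)
      = Matrix.of (fun i e : Fin (m + 1) => x i ^ (e : ℕ) * (1 - t * t ^ (e : ℕ) * g i)) from rfl]
    rw [det_Mu t t x hx g]
    congr 2
  simp only [hB1, hB2, Fin.val_last] at hkey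
  rw [hcn] at hkey
  have hneg1 : ((-1 : K) ^ (m + 1)) * ((-1 : K) ^ (m + 1)) = 1 := by
    rw [← pow_add]
    exact Even.neg_one_pow ⟨m + 1, rfl⟩
  have hxprod : ∏ i, x i * Hh i = (∏ i, x i) * ∏ i, Hh i := Finset.prod_mul_distrib
  have hxyprod : ∏ i, x i * y i = (∏ i, x i) * ∏ i, y i := Finset.prod_mul_distrib
  have hHprod : (∏ i, Hh i) ≠ 0 := Finset.prod_ne_zero_iff.2 fun i _ => hH0 i
  have hdetV : Matrix.det (Matrix.vandermonde x) ≠ 0 :=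
    Matrix.det_vandermonde_ne_zero_iff.2 hx
  have h2 : bisymF 1 t x y * ((∏ i, Hh i) * Matrix.det (Matrix.vandermonde x))
      = (bisymF t t x y * ∏ i, x i * y i)
        * ((∏ i, Hh i) * Matrix.det (Matrix.vandermonde x)) := by
    rw [hxyprod]
    rw [hxprod] at hkey
    linear_combination hkey + ((∏ i, y i) * (∏ i, x i) * (∏ i, Hh i)
      * bisymF t t x y * Matrix.det (Matrix.vandermonde x)) * hneg1
  exact mul_right_cancel₀ (mul_ne_zero hHprod hdetV) h2
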